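/- arXiv:2605.26611 — 7 statements merged into one kernel-verified Lean document; each statement's English description precedes it below -/
import Mathlib

section
/- Suppose F ⊆ ω^ω, F⁻ = F ∖ 0*, there is an interval partition J = ⟨J_m : m < ω⟩ of ω that dominates the interval partition I^f for every f ∈ F⁻ (where I^f is determined by the positions of nonzero values of f), and there is a predictor π predicting every f ∈ F⁻. Then there exists a predictor π′ that predicts every f ∈ F⁻ and predicts no f ∈ 0*. Consequently, 𝔢₀ ≥ min{𝔢, 𝔟}. -/
open Filter Set

def restr (f : ℕ → ℕ) (n : ℕ) : ℕ → ℕ := fun i => if i < n then f i else 0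

def EvZero (f : ℕ → ℕ) : Prop := ∀ᶠ n in atTop, f n = 0

structure Predictor where
  D : Set ℕ
  Dinf : D.Infinite
  p : ℕ → (ℕ → ℕ) → ℕ

def Predicts (π : Predictor) (f : ℕ → ℕ) : Prop :=
  ∀ᶠ n in atTop, n ∈ π.D → f n = π.p n (restr f n)

def ZPredicts (π : Predictor) (f : ℕ → ℕ) : Prop :=
  (¬ EvZero f ∧ Predicts π f) ∨ (EvZero f ∧ ¬ Predicts π f)

noncomputable def eNum : Cardinal :=
  sInf { c | ∃ F : Set (ℕ → ℕ), Cardinal.mk F = c ∧ ∀ π : Predictor, ∃ f ∈ F, ¬ Predicts π f }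

noncomputable def eZero : Cardinal :=
  sInf { c | ∃ F : Set (ℕ → ℕ), Cardinal.mk F = c ∧ ∀ π : Predictor, ∃ f ∈ F, ¬ ZPredicts π f }

noncomputable def bNum : Cardinal :=
  sInf { c | ∃ F : Set (ℕ → ℕ), Cardinal.mk F = c ∧
    ∀ g : ℕ → ℕ, ∃ f ∈ F, ¬ ∀ᶠ n in atTop, f n ≤ g n }

structure IntPart where
  t : ℕ → ℕ
  t0 : t 0 = 0
  mono : StrictMono t

def blk (P : IntPart) (m : ℕ) : Set ℕ := Set.Ico (P.t m) (P.t (m+1))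

def IPle (I J : IntPart) : Prop := ∀ᶠ m in atTop, ∃ n, blk I n ⊆ blk J m

def IsNZPart (f : ℕ → ℕ) (P : IntPart) : Prop :=
  (∀ k, f (P.t (k+1)) ≠ 0) ∧ ∀ i, f i ≠ 0 → ∃ k, i = P.t (k+1)

/-! A predictor that already predicts every `f ∈ F⁻` is corrected so that it fails on `0*`: at
a position `n` it keeps its guess only if the history `f ↾ n` is nonzero somewhere in the last
complete block of a fixed interval partition `J`, and otherwise guesses a nonzero value. An
eventually zero `f` has zero history on those blocks from some point on, so it sees only nonzero
guesses and is never predicted; a function that is nonzero in almost every `J`-block keeps the original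
guesses from some point on. For `𝔢₀ ≥ min 𝔢 𝔟`, a family smaller than `𝔢` and `𝔟` has a common
predictor, and the next-nonzero-position functions of its members are dominated by some `g`;
iterating `g` yields a partition `J` whose almost every block meets the support of each member. -/

open Cardinal

def HitsAlmostAllBlocks (J : IntPart) (f : ℕ → ℕ) : Prop :=
  ∀ᶠ m in atTop, ∃ i ∈ blk J m, f i ≠ 0

namespace IntPart

variable (J : IntPart)

lemma le_t (m : ℕ) : m ≤ J.t m := J.mono.le_apply

noncomputable def lastBlock (n : ℕ) : ℕ :=
  Nat.findGreatest (fun m => J.t (m + 1) ≤ n) n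

variable {J}

lemma le_lastBlock {n m : ℕ} (h : J.t (m + 1) ≤ n) : m ≤ J.lastBlock n :=
  Nat.le_findGreatest ((Nat.le_succ m).trans ((J.le_t _).trans h)) h

lemma t_lastBlock_succ_le {n : ℕ} (h : J.t 1 ≤ n) : J.t (J.lastBlock n + 1) ≤ n :=
  Nat.findGreatest_spec (P := fun m => J.t (m + 1) ≤ n) (Nat.zero_le n) h

end IntPart

lemma hitsAlmostAllBlocks_of_isNZPart_of_IPle {f : ℕ → ℕ} {I J : IntPart}
    (hf : IsNZPart f I) (hIJ : IPle I J) : HitsAlmostAllBlocks J f := by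
  filter_upwards [hIJ, eventually_ge_atTop 1] with m ⟨k, hk⟩ hm
  have hJ : I.t k ∈ blk J m := hk ⟨le_rfl, I.mono k.lt_succ_self⟩
  obtain ⟨k, rfl⟩ : ∃ k', k = k' + 1 := by
    refine Nat.exists_eq_succ_of_ne_zero fun hk0 => ?_
    have := hJ.1
    rw [hk0, I.t0] at this
    have := J.le_t m
    omega
  exact ⟨_, hJ, hf.1 k⟩

namespace Predictor

lemma exists_mem_D_ge (π : Predictor) (N : ℕ) : ∃ n ∈ π.D, N ≤ n := by
  obtain ⟨n, hn, hnN⟩ := (π.Dinf.sdiff (finite_Iio N)).nonempty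
  exact ⟨n, hn, not_lt.mp hnN⟩

open Classical in
noncomputable def zeroGuard (J : IntPart) (π : Predictor) : Predictor where
  D := π.D
  Dinf := π.Dinf
  p n h := if ∃ i ∈ blk J (J.lastBlock n), h i ≠ 0 then π.p n h else π.p n h + 1

lemma zeroGuard_not_predicts (J : IntPart) (π : Predictor) {f : ℕ → ℕ} (hf : EvZero f) :
    ¬ Predicts (zeroGuard J π) f := by
  intro hp
  obtain ⟨N, hN⟩ := eventually_atTop.mp hf
  obtain ⟨N', hN'⟩ := eventually_atTop.mp hp
  obtain ⟨n, hnD, hn⟩ := π.exists_mem_D_ge (max N' (J.t (N + 1)))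
  have hNn : J.t (N + 1) ≤ n := le_of_max_le_right hn
  have hquiet : ¬ ∃ i ∈ blk J (J.lastBlock n), restr f n i ≠ 0 := by
    rintro ⟨i, hi, hfi⟩
    have : N ≤ i := ((IntPart.le_lastBlock hNn).trans (J.le_t _)).trans hi.1
    simp [restr, hN i this] at hfi
  have hfn : f n = 0 := hN n ((Nat.le_succ N).trans ((J.le_t _).trans hNn))
  have := hN' n (le_of_max_le_left hn) hnD
  simp only [zeroGuard, if_neg hquiet, hfn] at this
  omega

lemma zeroGuard_predicts {J : IntPart} {π : Predictor} {f : ℕ → ℕ} (hp : Predicts π f)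
    (hJ : HitsAlmostAllBlocks J f) : Predicts (zeroGuard J π) f := by
  obtain ⟨M, hM⟩ := eventually_atTop.mp hJ
  filter_upwards [hp, eventually_ge_atTop (J.t (M + 1))] with n hpn hn hnD
  have hlast : J.t (J.lastBlock n + 1) ≤ n :=
    IntPart.t_lastBlock_succ_le ((J.mono.monotone (by omega : 1 ≤ M + 1)).trans hn)
  obtain ⟨i, hi, hfi⟩ := hM _ (IntPart.le_lastBlock hn)
  have hseen : ∃ i ∈ blk J (J.lastBlock n), restr f n i ≠ 0 :=
    ⟨i, hi, by rwa [restr, if_pos (hi.2.trans_le hlast)]⟩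
  simpa only [zeroGuard, if_pos hseen] using hpn hnD

noncomputable def evader (π : Predictor) : ℕ → ℕ
  | n => π.p n (fun i => if _ : i < n then evader π i else 0) + 1

lemma evader_eq (π : Predictor) (n : ℕ) :
    evader π n = π.p n (restr (evader π) n) + 1 := by
  rw [evader]
  rfl

lemma not_zPredicts_evader (π : Predictor) : ¬ ZPredicts π (evader π) := by
  rintro (⟨-, hp⟩ | ⟨hz, -⟩)
  · obtain ⟨N, hN⟩ := eventually_atTop.mp hp
    obtain ⟨n, hnD, hn⟩ := π.exists_mem_D_ge N
    have := hN n hn hnD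
    rw [evader_eq] at this
    omega
  · obtain ⟨n, hn⟩ := hz.exists
    rw [evader_eq] at hn
    omega

end Predictor

-- The evaders make the defining set nonempty, which matters since `sInf ∅ = 0`.
lemma exists_mk_eq_eZero :
    ∃ F : Set (ℕ → ℕ), #F = eZero ∧ ∀ π : Predictor, ∃ f ∈ F, ¬ ZPredicts π f :=
  csInf_mem (s := { c | ∃ F : Set (ℕ → ℕ), #F = c ∧ ∀ π : Predictor, ∃ f ∈ F, ¬ ZPredicts π f })
    ⟨_, univ, rfl, fun π => ⟨π.evader, mem_univ _, π.not_zPredicts_evader⟩⟩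

lemma exists_predicts_of_mk_lt_eNum {F : Set (ℕ → ℕ)} (hF : #F < eNum) :
    ∃ π : Predictor, ∀ f ∈ F, Predicts π f := by
  by_contra! h
  exact (csInf_le' ⟨F, rfl, h⟩ : eNum ≤ #F).not_gt hF

lemma exists_eventually_le_of_mk_lt_bNum {F : Set (ℕ → ℕ)} (hF : #F < bNum) :
    ∃ g : ℕ → ℕ, ∀ f ∈ F, ∀ᶠ n in atTop, f n ≤ g n := by
  by_contra h
  refine (csInf_le' ⟨F, rfl, fun g => ?_⟩ : bNum ≤ #F).not_gt hF
  obtain ⟨f, hf, hfg⟩ := not_forall₂.mp (not_exists.mp h g)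
  exact ⟨f, hf, hfg⟩

def iterateStep (g : ℕ → ℕ) : ℕ → ℕ
  | 0 => 0
  | m + 1 => iterateStep g m + g (iterateStep g m) + 1

def IntPart.ofStep (g : ℕ → ℕ) : IntPart where
  t := iterateStep g
  t0 := rfl
  mono := strictMono_nat_of_lt_succ fun m => by simp only [iterateStep]; omega

lemma exists_ge_ne_zero_of_not_evZero {f : ℕ → ℕ} (hf : ¬ EvZero f) (n : ℕ) :
    ∃ i, n ≤ i ∧ f i ≠ 0 :=
  frequently_atTop.mp (not_eventually.mp hf) n

lemma exists_intPart_hitsAlmostAllBlocks {F : Set (ℕ → ℕ)} (hF : ∀ f ∈ F, ¬ EvZero f)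
    (hFb : #F < bNum) : ∃ J : IntPart, ∀ f ∈ F, HitsAlmostAllBlocks J f := by
  let next (f : F) (n : ℕ) : ℕ := Nat.find (exists_ge_ne_zero_of_not_evZero (hF f f.2) n)
  obtain ⟨g, hg⟩ := exists_eventually_le_of_mk_lt_bNum (F := range next)
    (mk_range_le.trans_lt hFb)
  refine ⟨IntPart.ofStep g, fun f hf => ?_⟩
  let J := IntPart.ofStep g
  obtain ⟨N, hN⟩ := eventually_atTop.mp (hg _ ⟨⟨f, hf⟩, rfl⟩)
  filter_upwards [eventually_ge_atTop N] with m hm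
  obtain ⟨hge, hne⟩ := Nat.find_spec (exists_ge_ne_zero_of_not_evZero (hF f hf) (J.t m))
  have hle : next ⟨f, hf⟩ (J.t m) ≤ g (J.t m) := hN _ (hm.trans (J.le_t m))
  refine ⟨next ⟨f, hf⟩ (J.t m), ⟨hge, ?_⟩, hne⟩
  change _ < iterateStep g m + g (iterateStep g m) + 1
  exact Nat.lt_succ_of_le (hle.trans (Nat.le_add_left _ _))

theorem stmt2 :
    (∀ (F : Set (ℕ → ℕ)) (If : (ℕ → ℕ) → IntPart) (J : IntPart) (π : Predictor),
      (∀ f ∈ F \ {g | EvZero g}, IsNZPart f (If f)) →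
      (∀ f ∈ F \ {g | EvZero g}, IPle (If f) J) →
      (∀ f ∈ F \ {g | EvZero g}, Predicts π f) →
      ∃ π' : Predictor, (∀ f ∈ F \ {g | EvZero g}, Predicts π' f) ∧
        ∀ f : ℕ → ℕ, EvZero f → ¬ Predicts π' f) ∧
    min eNum bNum ≤ eZero := by
  refine ⟨fun F If J π hI hIJ hπ => ⟨π.zeroGuard J, fun f hf => ?_,
    fun f hf => π.zeroGuard_not_predicts J hf⟩, ?_⟩
  · exact Predictor.zeroGuard_predicts (hπ f hf)
      (hitsAlmostAllBlocks_of_isNZPart_of_IPle (hI f hf) (hIJ f hf))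
  by_contra! hlt
  obtain ⟨hE, hB⟩ := lt_min_iff.mp hlt
  obtain ⟨F, hF, hevade⟩ := exists_mk_eq_eZero
  have hmk : #(F \ {g | EvZero g} : Set (ℕ → ℕ)) ≤ eZero := hF ▸ mk_le_mk_of_subset sdiff_subset
  obtain ⟨π, hπ⟩ := exists_predicts_of_mk_lt_eNum (hmk.trans_lt hE)
  obtain ⟨J, hJ⟩ := exists_intPart_hitsAlmostAllBlocks (fun f hf => hf.2) (hmk.trans_lt hB)
  obtain ⟨f, hfF, hf⟩ := hevade (π.zeroGuard J)
  by_cases hz : EvZero f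
  · exact hf (Or.inr ⟨hz, π.zeroGuard_not_predicts J hz⟩)
  · exact hf (Or.inl ⟨hz, Predictor.zeroGuard_predicts (hπ f ⟨hfF, hz⟩) (hJ f ⟨hfF, hz⟩)⟩)
end

section
/- For any k ≥ 1, the 0*-version of the global evasion number of width k equals the global evasion number of width k: (𝔢ᵍ_k)₀ = 𝔢ᵍ_k. In particular, if F ⊆ ω^ω has size less than 𝔢ᵍ_k, then there is a global predictor of width k which globally predicts every f ∈ F ∖ 0* and globally predicts no f ∈ 0*. -/
open Filter Set

structure GPred (k : ℕ) where
  p : ℕ → (ℕ → ℕ) → Finset ℕ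
  card_eq : ∀ n σ, (p n σ).card = k

def GPredicts {k : ℕ} (π : GPred k) (f : ℕ → ℕ) : Prop :=
  ∀ᶠ n in atTop, f n ∈ π.p n (restr f n)

def ZGPredicts {k : ℕ} (π : GPred k) (f : ℕ → ℕ) : Prop :=
  (¬ EvZero f ∧ GPredicts π f) ∨ (EvZero f ∧ ¬ GPredicts π f)

noncomputable def egNum (k : ℕ) : Cardinal :=
  sInf { c | ∃ F : Set (ℕ → ℕ), Cardinal.mk F = c ∧ ∀ π : GPred k, ∃ f ∈ F, ¬ GPredicts π f }

noncomputable def egZero (k : ℕ) : Cardinal :=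
  sInf { c | ∃ F : Set (ℕ → ℕ), Cardinal.mk F = c ∧ ∀ π : GPred k, ∃ f ∈ F, ¬ ZGPredicts π f }


def hist {k : ℕ} (π : GPred k) : ℕ → List ℕ
  | 0 => []
  | n+1 => hist π n ++ [(π.p n (fun i => (hist π n).getD i 0)).sup id + 1]

lemma hist_length {k : ℕ} (π : GPred k) (n : ℕ) : (hist π n).length = n := by
  induction n with
  | zero => rfl
  | succ n ih => simp [hist, ih]

def diagf {k : ℕ} (π : GPred k) (n : ℕ) : ℕ := (hist π (n+1)).getD n 0

lemma hist_getD {k : ℕ} (π : GPred k) {i n : ℕ} (h : i < n) :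
    (hist π n).getD i 0 = diagf π i := by
  induction n with
  | zero => omega
  | succ n ih =>
    rcases Nat.lt_or_ge i n with h' | h'
    · show (hist π n ++ _).getD i 0 = _
      rw [List.getD_append _ _ _ _ (by rw [hist_length]; exact h')]
      exact ih h'
    · have : i = n := by omega
      subst this
      rfl

lemma restr_diagf {k : ℕ} (π : GPred k) (n : ℕ) :
    restr (diagf π) n = fun i => (hist π n).getD i 0 := by
  funext i
  unfold restr
  rcases Nat.lt_or_ge i n with h | h
  · rw [if_pos h, hist_getD π h]
  · rw [if_neg (by omega)]
    rw [List.getD_eq_default]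
    rw [hist_length]; omega

lemma diagf_spec {k : ℕ} (π : GPred k) (n : ℕ) :
    diagf π n = (π.p n (restr (diagf π) n)).sup id + 1 := by
  rw [restr_diagf]
  show (hist π n ++ _).getD n 0 = _
  rw [List.getD_eq_getElem?_getD, List.getElem?_append_right (by rw [hist_length])]
  simp [hist_length]

lemma diagf_not_mem {k : ℕ} (π : GPred k) (n : ℕ) :
    diagf π n ∉ π.p n (restr (diagf π) n) := by
  intro hmem
  have h1 : id (diagf π n) ≤ (π.p n (restr (diagf π) n)).sup id :=
    Finset.le_sup (f := id) hmem
  simp only [id] at h1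
  rw [diagf_spec π n] at h1
  omega

lemma diagf_ne_zero {k : ℕ} (π : GPred k) (n : ℕ) : diagf π n ≠ 0 := by
  rw [diagf_spec]; omega

/- coding -/
def codef (x : ℕ → ℕ) : ℕ → ℕ
  | 0 => Nat.pair 0 (x 0)
  | n+1 => Nat.pair (codef x n) (x (n+1))

lemma le_codef (x : ℕ → ℕ) (n : ℕ) : x n ≤ codef x n := by
  cases n <;> exact Nat.right_le_pair _ _

def prev (v : ℕ) : ℕ := (Nat.unpair v).1

lemma prev_codef (x : ℕ → ℕ) (n : ℕ) : prev (codef x (n+1)) = codef x n := by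
  simp [prev, codef, Nat.unpair_pair]

lemma prev_iter (x : ℕ → ℕ) : ∀ n i, i ≤ n → prev^[n - i] (codef x n) = codef x i := by
  intro n
  induction n with
  | zero => intro i hi; interval_cases i; simp
  | succ n ih =>
    intro i hi
    rcases Nat.eq_or_lt_of_le hi with h | h
    · subst h; simp
    · have hi' : i ≤ n := by omega
      have : n + 1 - i = (n - i) + 1 := by omega
      rw [this, Function.iterate_succ_apply, prev_codef, ih i hi']

def R (n v : ℕ) : ℕ → ℕ := fun i => if i < n then prev^[n - 1 - i] v else 0

lemma restr_codef (x : ℕ → ℕ) (n : ℕ) :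
    restr (codef x) (n+1) = R (n+1) (codef x n) := by
  funext i
  unfold restr R
  by_cases h : i < n + 1
  · rw [if_pos h, if_pos h]
    have : n + 1 - 1 - i = n - i := by omega
    rw [this, prev_iter x n i (by omega)]
  · rw [if_neg h, if_neg h]

def Bf {k : ℕ} (π : GPred k) (N v : ℕ) : ℕ → ℕ
  | 0 => v
  | j+1 => Finset.sup (Finset.range (Bf π N v j + 1))
      (fun w => (π.p (N+j+1) (R (N+j+1) w)).sup id)

lemma codef_le_Bf {k : ℕ} (π : GPred k) (x : ℕ → ℕ) (N : ℕ)
    (hp : ∀ n, N ≤ n → codef x n ∈ π.p n (restr (codef x) n)) :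
    ∀ j, codef x (N + j) ≤ Bf π N (codef x N) j := by
  intro j
  induction j with
  | zero => simp [Bf]
  | succ j ih =>
    have hmem := hp (N+j+1) (by omega)
    rw [restr_codef x (N+j)] at hmem
    have h1 : id (codef x (N+j+1)) ≤ (π.p (N+j+1) (R (N+j+1) (codef x (N+j)))).sup id :=
      Finset.le_sup hmem
    have h2 : (π.p (N+j+1) (R (N+j+1) (codef x (N+j)))).sup id ≤ Bf π N (codef x N) (j+1) :=
      Finset.le_sup (f := fun w => (π.p (N+j+1) (R (N+j+1) w)).sup id)
        (Finset.mem_range.2 (Nat.lt_succ_of_le ih))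
    calc codef x (N + (j+1)) = id (codef x (N+j+1)) := by rw [show N+(j+1) = N+j+1 from rfl]; rfl
    _ ≤ _ := h1
    _ ≤ _ := h2

lemma tree_bound {k : ℕ} (π : GPred k) :
    ∃ g : ℕ → ℕ, ∀ x : ℕ → ℕ, GPredicts π (codef x) → ∀ᶠ n in atTop, x n < g n := by
  refine ⟨fun n => (Finset.sup (Finset.range (n+1)) fun N =>
    Finset.sup (Finset.range (n+1)) fun v => Bf π N v (n - N)) + 1, ?_⟩
  intro x hx
  rw [GPredicts, eventually_atTop] at hx
  obtain ⟨N, hN⟩ := hx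
  rw [eventually_atTop]
  refine ⟨max N (codef x N), fun n hn => ?_⟩
  have hNn : N ≤ n := le_trans (le_max_left _ _) hn
  have hvn : codef x N ≤ n := le_trans (le_max_right _ _) hn
  have h1 : codef x n ≤ Bf π N (codef x N) (n - N) := by
    have := codef_le_Bf π x N hN (n - N)
    rwa [Nat.add_sub_cancel' hNn] at this
  have h2 : Bf π N (codef x N) (n - N) ≤
      Finset.sup (Finset.range (n+1)) fun v => Bf π N v (n - N) :=
    Finset.le_sup (f := fun v => Bf π N v (n - N)) (Finset.mem_range.2 (by omega))
  have h3 : (Finset.sup (Finset.range (n+1)) fun v => Bf π N v (n - N)) ≤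
      Finset.sup (Finset.range (n+1)) (fun N => Finset.sup (Finset.range (n+1))
        fun v => Bf π N v (n - N)) :=
    Finset.le_sup (f := fun N => Finset.sup (Finset.range (n+1)) fun v => Bf π N v (n - N))
      (Finset.mem_range.2 (by omega))
  have h4 := le_codef x n
  exact Nat.lt_succ_of_le (by omega)

lemma predictable {k : ℕ} (F : Set (ℕ → ℕ)) (hF : Cardinal.mk F < egNum k) :
    ∃ π : GPred k, ∀ f ∈ F, GPredicts π f := by
  by_contra hcon
  push_neg at hcon
  have : Cardinal.mk F ∈ { c | ∃ F : Set (ℕ → ℕ), Cardinal.mk F = c ∧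
      ∀ π : GPred k, ∃ f ∈ F, ¬ GPredicts π f } := ⟨F, rfl, hcon⟩
  exact absurd (csInf_le' this) (not_le.2 hF)

/- next nonzero function -/
open Classical in
noncomputable def hfun (f : ℕ → ℕ) (m : ℕ) : ℕ :=
  if h : ∃ n, m ≤ n ∧ f n ≠ 0 then Nat.find h else 0

lemma hfun_spec {f : ℕ → ℕ} (hf : ¬ EvZero f) (m : ℕ) :
    m ≤ hfun f m ∧ f (hfun f m) ≠ 0 := by
  have hex : ∃ n, m ≤ n ∧ f n ≠ 0 := by
    rw [EvZero, Filter.not_eventually] at hf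
    obtain ⟨n, hn, hn'⟩ := (frequently_atTop.1 hf) m
    exact ⟨n, hn, hn'⟩
  rw [hfun]
  rw [dif_pos hex]
  exact Nat.find_spec hex

/- the avoiding set -/
def avoidK (k : ℕ) : Finset ℕ := Finset.image (· + 1) (Finset.range k)

lemma avoidK_card (k : ℕ) : (avoidK k).card = k := by
  rw [avoidK, Finset.card_image_of_injective _ (fun a b h => by omega), Finset.card_range]

lemma zero_not_mem_avoidK (k : ℕ) : 0 ∉ avoidK k := by
  simp [avoidK]

/- the sabotage condition -/
def Cond (g : ℕ → ℕ) (n : ℕ) (σ : ℕ → ℕ) : Prop :=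
  ∃ i, i < n ∧ g i < n ∧ ∀ j, i ≤ j → j < n → σ j = 0

open Classical in
noncomputable def zpred {k : ℕ} (πF : GPred k) (g : ℕ → ℕ) : GPred k where
  p := fun n σ => if Cond g n σ then avoidK k else πF.p n σ
  card_eq := fun n σ => by
    show (if Cond g n σ then avoidK k else πF.p n σ).card = k
    split_ifs with h
    · exact avoidK_card k
    · exact πF.card_eq n σ

open Classical in
lemma zpred_p {k : ℕ} (πF : GPred k) (g : ℕ → ℕ) (n : ℕ) (σ : ℕ → ℕ) :
    (zpred πF g).p n σ = if Cond g n σ then avoidK k else πF.p n σ := rfl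

lemma zpred_zero {k : ℕ} (πF : GPred k) (g : ℕ → ℕ) (f : ℕ → ℕ) (hf : EvZero f) :
    ¬ GPredicts (zpred πF g) f := by
  rw [EvZero, eventually_atTop] at hf
  obtain ⟨L, hL⟩ := hf
  intro hGP
  rw [GPredicts, eventually_atTop] at hGP
  obtain ⟨N, hN⟩ := hGP
  set n := max N (max L (g L)) + 1 with hn
  have hcond : Cond g n (restr f n) := by
    refine ⟨L, by omega, by omega, fun j hj hj' => ?_⟩
    rw [restr, if_pos hj']
    exact hL j hj
  have hmem := hN n (by omega)
  have : (zpred πF g).p n (restr f n) = avoidK k := by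
    rw [zpred_p, if_pos hcond]
  rw [this, hL n (by omega)] at hmem
  exact zero_not_mem_avoidK k hmem

lemma zpred_pos {k : ℕ} (πF : GPred k) (g : ℕ → ℕ) (f : ℕ → ℕ) (hf : ¬ EvZero f)
    (hpf : GPredicts πF f) (hg : ∀ᶠ n in atTop, hfun f n < g n) :
    GPredicts (zpred πF g) f := by
  rw [eventually_atTop] at hg
  obtain ⟨Nd, hNd⟩ := hg
  rw [GPredicts, eventually_atTop] at hpf ⊢
  obtain ⟨Np, hNp⟩ := hpf
  refine ⟨max Np (hfun f Nd) + 1, fun n hn => ?_⟩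
  have hnocond : ¬ Cond g n (restr f n) := by
    rintro ⟨i, hi, hgi, hzero⟩
    rcases Nat.lt_or_ge i Nd with hiNd | hiNd
    · -- use witness at Nd
      obtain ⟨h1, h2⟩ := hfun_spec hf Nd
      have hlt : hfun f Nd < n := by omega
      have := hzero (hfun f Nd) (by omega) hlt
      rw [restr, if_pos hlt] at this
      exact h2 this
    · obtain ⟨h1, h2⟩ := hfun_spec hf i
      have hflt : hfun f i < n := lt_trans (lt_of_lt_of_le (hNd i hiNd) (le_refl _)) (by omega)
      have := hzero (hfun f i) h1 hflt
      rw [restr, if_pos hflt] at this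
      exact h2 this
  have : (zpred πF g).p n (restr f n) = πF.p n (restr f n) := by
    rw [zpred_p, if_neg hnocond]
  rw [this]
  exact hNp n (by omega)

lemma main_lemma {k : ℕ} (F : Set (ℕ → ℕ)) (hF : Cardinal.mk F < egNum k) :
    ∃ π : GPred k, (∀ f ∈ F, ¬ EvZero f → GPredicts π f) ∧
      ∀ f : ℕ → ℕ, EvZero f → ¬ GPredicts π f := by
  obtain ⟨πF, hπF⟩ := predictable F hF
  set C : Set (ℕ → ℕ) := (fun f => codef (hfun f)) '' F with hC
  have hCcard : Cardinal.mk C < egNum k := lt_of_le_of_lt Cardinal.mk_image_le hF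
  obtain ⟨πC, hπC⟩ := predictable C hCcard
  obtain ⟨g, hg⟩ := tree_bound πC
  refine ⟨zpred πF g, fun f hf hev => ?_, fun f hev => zpred_zero πF g f hev⟩
  exact zpred_pos πF g f hev (hπF f hf)
    (hg (hfun f) (hπC _ ⟨f, hf, rfl⟩))

/- padding -/
noncomputable def padK (k : ℕ) (s : Finset ℕ) : Finset ℕ :=
  if h : s.card ≤ k then Classical.choose (Infinite.exists_superset_card_eq s k h) else s

lemma padK_spec {k : ℕ} {s : Finset ℕ} (h : s.card ≤ k) :
    s ⊆ padK k s ∧ (padK k s).card = k := by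
  rw [padK, dif_pos h]
  obtain ⟨h1, h2⟩ := Classical.choose_spec (Infinite.exists_superset_card_eq s k h)
  exact ⟨h1, h2⟩

/- downshift predictor -/
noncomputable def downPred {k : ℕ} (π' : GPred k) : GPred k where
  p := fun n σ => padK k ((π'.p n (fun i => if i < n then σ i + 1 else 0)).image (· - 1))
  card_eq := fun n σ => by
    have hle : ((π'.p n (fun i => if i < n then σ i + 1 else 0)).image (· - 1)).card ≤ k := by
      refine le_trans (Finset.card_image_le) ?_
      rw [π'.card_eq]
    exact (padK_spec hle).2

lemma downPred_works {k : ℕ} (π' : GPred k) (f : ℕ → ℕ)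
    (h : GPredicts π' (fun n => f n + 1)) : GPredicts (downPred π') f := by
  rw [GPredicts] at h ⊢
  refine h.mono fun n hn => ?_
  have harg : (fun i => if i < n then (restr f n) i + 1 else 0) = restr (fun m => f m + 1) n := by
    funext i
    unfold restr
    by_cases hi : i < n <;> simp [hi]
  have hmem : f n ∈ (π'.p n (fun i => if i < n then (restr f n) i + 1 else 0)).image (· - 1) := by
    rw [harg]
    exact Finset.mem_image.2 ⟨f n + 1, hn, by omega⟩
  have hle : ((π'.p n (fun i => if i < n then (restr f n) i + 1 else 0)).image (· - 1)).card ≤ k := by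
    refine le_trans (Finset.card_image_le) ?_
    rw [π'.card_eq]
  exact (padK_spec hle).1 hmem

lemma setNum_sub_setZero (k : ℕ) :
    { c | ∃ F : Set (ℕ → ℕ), Cardinal.mk F = c ∧ ∀ π : GPred k, ∃ f ∈ F, ¬ GPredicts π f } ⊆
    { c | ∃ F : Set (ℕ → ℕ), Cardinal.mk F = c ∧ ∀ π : GPred k, ∃ f ∈ F, ¬ ZGPredicts π f } := by
  rintro c ⟨F, hFc, hFw⟩
  refine ⟨(fun f => fun n => f n + 1) '' F, ?_, ?_⟩
  · rw [Cardinal.mk_image_eq (fun f h heq => ?_)]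
    · exact hFc
    · funext n
      have := congrFun heq n
      simpa using this
  · intro π'
    obtain ⟨f, hfF, hfn⟩ := hFw (downPred π')
    refine ⟨fun n => f n + 1, ⟨f, hfF, rfl⟩, ?_⟩
    rintro (⟨_, hGP⟩ | ⟨hEv, _⟩)
    · exact hfn (downPred_works π' f hGP)
    · obtain ⟨n, hn⟩ := hEv.exists
      simp at hn

lemma num_witness (k : ℕ) : Cardinal.mk (univ : Set (ℕ → ℕ)) ∈
    { c | ∃ F : Set (ℕ → ℕ), Cardinal.mk F = c ∧ ∀ π : GPred k, ∃ f ∈ F, ¬ GPredicts π f } := by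
  refine ⟨univ, rfl, fun π => ⟨diagf π, mem_univ _, fun h => ?_⟩⟩
  obtain ⟨n, hn⟩ := h.exists
  exact diagf_not_mem π n hn

lemma zero_witness (k : ℕ) : Cardinal.mk (univ : Set (ℕ → ℕ)) ∈
    { c | ∃ F : Set (ℕ → ℕ), Cardinal.mk F = c ∧ ∀ π : GPred k, ∃ f ∈ F, ¬ ZGPredicts π f } := by
  refine ⟨univ, rfl, fun π => ⟨diagf π, mem_univ _, ?_⟩⟩
  rintro (⟨_, hGP⟩ | ⟨hEv, _⟩)
  · obtain ⟨n, hn⟩ := hGP.exists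
    exact diagf_not_mem π n hn
  · obtain ⟨n, hn⟩ := hEv.exists
    exact diagf_ne_zero π n hn


theorem stmt4 (k : ℕ) (hk : 1 ≤ k) :
    egZero k = egNum k ∧
    ∀ F : Set (ℕ → ℕ), Cardinal.mk F < egNum k →
      ∃ π : GPred k, (∀ f ∈ F, ¬ EvZero f → GPredicts π f) ∧
        ∀ f : ℕ → ℕ, EvZero f → ¬ GPredicts π f := by
  refine ⟨le_antisymm ?_ ?_, fun F hF => main_lemma F hF⟩
  · exact csInf_le_csInf (OrderBot.bddBelow _) ⟨_, num_witness k⟩ (setNum_sub_setZero k)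
  · by_contra hcon
    rw [not_le] at hcon
    have hne : { c | ∃ F : Set (ℕ → ℕ), Cardinal.mk F = c ∧
        ∀ π : GPred k, ∃ f ∈ F, ¬ ZGPredicts π f }.Nonempty := ⟨_, zero_witness k⟩
    obtain ⟨F, hFc, hFw⟩ := csInf_mem hne
    have hlt : Cardinal.mk F < egNum k := by rw [hFc]; exact hcon
    obtain ⟨π, h1, h2⟩ := main_lemma F hlt
    obtain ⟨f, hfF, hfn⟩ := hFw π
    apply hfn
    by_cases hEv : EvZero f
    · exact Or.inr ⟨hEv, h2 f hEv⟩
    · exact Or.inl ⟨hEv, h1 f hfF hEv⟩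
end

section
/- Let F⁻ ⊆ ω^ω ∖ 0*, let J = ⟨J_m : m < ω⟩ be an interval partition of ω such that for every f ∈ F⁻, for all but finitely many m there is an interval of I^f contained in J_m, and let π be a global predictor of width k globally predicting every f ∈ F⁻. Define π′ on σ ∈ ω^n (with n ∈ J_m) by π′(σ) = π(σ) if σ(i) ≠ 0 for some i ∈ J_{m-1}, and π′(σ) = {1,…,k} otherwise. Then π′ globally predicts every f ∈ F⁻ and globally predicts no f ∈ 0*. -/
open Filter Set

lemma IntPart.le_t_s5 (P : IntPart) (n : ℕ) : n ≤ P.t n :=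
  P.mono.le_apply

lemma exists_blk (J : IntPart) (n : ℕ) : ∃ m, n ∈ blk J m := by
  have h : ∃ m, n < J.t (m + 1) :=
    ⟨n, lt_of_lt_of_le (Nat.lt_succ_self n) (J.le_t_s5 (n+1))⟩
  refine ⟨Nat.find h, ?_, Nat.find_spec h⟩
  rcases Nat.eq_zero_or_pos (Nat.find h) with h0 | h0
  · rw [h0, J.t0]; exact Nat.zero_le n
  · have := Nat.find_min h (Nat.pred_lt (Nat.pos_iff_ne_zero.mp h0))
    push_neg at this
    have h2 : J.t (Nat.find h - 1 + 1) ≤ n := this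
    have h3 : Nat.find h - 1 + 1 = Nat.find h := by omega
    rwa [h3] at h2

lemma blk_ge (J : IntPart) {n m M : ℕ} (h : n ∈ blk J m) (h2 : J.t M ≤ n) : M ≤ m := by
  by_contra h'
  push_neg at h'
  have hle : J.t (m+1) ≤ J.t M := J.mono.monotone h'
  exact absurd (lt_of_lt_of_le h.2 (le_trans hle h2)) (lt_irrefl n)

theorem stmt5 (k : ℕ) (hk : 1 ≤ k) (Fm : Set (ℕ → ℕ))
    (hFm : ∀ f ∈ Fm, ¬ EvZero f)
    (If : (ℕ → ℕ) → IntPart) (hIf : ∀ f ∈ Fm, IsNZPart f (If f)) (J : IntPart)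
    (hdom : ∀ f ∈ Fm, ∀ᶠ m in atTop, ∃ l, blk (If f) l ⊆ blk J m)
    (π π' : GPred k) (hπ : ∀ f ∈ Fm, GPredicts π f)
    (hπ' : ∀ n σ m, n ∈ blk J m →
      ((∃ i ∈ blk J (m-1), σ i ≠ 0) → π'.p n σ = π.p n σ) ∧
      ((¬ ∃ i ∈ blk J (m-1), σ i ≠ 0) → π'.p n σ = Finset.Icc 1 k)) :
    (∀ f ∈ Fm, GPredicts π' f) ∧ ∀ f : ℕ → ℕ, EvZero f → ¬ GPredicts π' f := by
  constructor
  · intro f hf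
    obtain ⟨N1, h1⟩ := Filter.eventually_atTop.mp (hπ f hf)
    obtain ⟨M, hM⟩ := Filter.eventually_atTop.mp (hdom f hf)
    refine Filter.eventually_atTop.mpr ⟨max N1 (J.t (M+2)), fun n hn => ?_⟩
    obtain ⟨m, hm⟩ := exists_blk J n
    have hmM : M + 2 ≤ m := blk_ge J hm (le_trans (le_max_right _ _) hn)
    obtain ⟨l, hl⟩ := hM (m-1) (by omega)
    have key : ∃ i ∈ blk J (m-1), restr f n i ≠ 0 := by
      rcases Nat.eq_zero_or_pos l with hl0 | hl0
      · exfalso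
        have h0 : (0 : ℕ) ∈ blk (If f) l := by
          subst hl0
          have hlt := (If f).mono (Nat.zero_lt_one)
          rw [(If f).t0] at hlt
          exact ⟨(If f).t0.le, hlt⟩
        have := (hl h0).1
        have h2 : (m : ℕ) - 1 ≤ J.t (m-1) := J.le_t_s5 _
        omega
      · refine ⟨(If f).t l, hl ⟨le_refl _, (If f).mono (Nat.lt_succ_self l)⟩, ?_⟩
        have hfi : f ((If f).t l) ≠ 0 := by
          have h4 := (hIf f hf).1 (l - 1)
          have h5 : l - 1 + 1 = l := by omega
          rwa [h5] at h4
        have hin : (If f).t l < n := by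
          have := (hl ⟨le_refl _, (If f).mono (Nat.lt_succ_self l)⟩).2
          have h2 : J.t (m - 1 + 1) ≤ J.t m := J.mono.monotone (by omega)
          exact lt_of_lt_of_le this (le_trans h2 hm.1)
        simpa [restr, hin] using hfi
    rw [(hπ' n (restr f n) m hm).1 key]
    exact h1 n (le_trans (le_max_left _ _) hn)
  · intro f hf hGP
    obtain ⟨N0, h0⟩ := Filter.eventually_atTop.mp hf
    obtain ⟨N1, h1⟩ := Filter.eventually_atTop.mp hGP
    set m := max N0 N1 + 1 with hm
    set n := J.t m with hn
    have hnm : m ≤ n := J.le_t_s5 m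
    have hblk : n ∈ blk J m := ⟨le_refl _, J.mono (Nat.lt_succ_self m)⟩
    have hno : ¬ ∃ i ∈ blk J (m-1), restr f n i ≠ 0 := by
      rintro ⟨i, hi, hne⟩
      have : N0 ≤ i := le_trans (by omega : N0 ≤ m - 1) (le_trans (J.le_t_s5 _) hi.1)
      have hfi : f i = 0 := h0 i this
      simp [restr, hfi] at hne
    have heq := (hπ' n (restr f n) m hblk).2 hno
    have hfn : f n = 0 := h0 n (by omega)
    have := h1 n (by omega)
    rw [heq, hfn] at this
    simp at this
end

section
/- The prediction forcing ℙℝ is σ-centered: there is a countable partition of ℙℝ such that any finitely many conditions in the same piece have a common extension. -/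
open Filter Set

def listOf (f : ℕ → ℕ) (n : ℕ) : List ℕ := (List.range n).map f

structure PRCond where
  len : ℕ
  ones : Finset ℕ
  ones_lt : ∀ n ∈ ones, n < len
  p : ℕ → List ℕ → Option ℕ
  p_dom : ∀ n σ, p n σ ≠ none → n ∈ ones ∧ σ.length = n
  p_fin : ∀ n, Set.Finite {σ : List ℕ | p n σ ≠ none}
  F : Set (ℕ → ℕ)
  F_fin : F.Finite
  F_sep : ∀ f ∈ F, ∀ g ∈ F, listOf f len = listOf g len → f = g

def PRle (q p : PRCond) : Prop :=
  p.len ≤ q.len ∧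
  (∀ n ∈ p.ones, n ∈ q.ones) ∧
  (∀ n ∈ q.ones, n < p.len → n ∈ p.ones) ∧
  (∀ n ∈ p.ones, ∀ σ v, p.p n σ = some v → q.p n σ = some v) ∧
  p.F ⊆ q.F ∧
  ∀ n ∈ q.ones, n ∉ p.ones → ∀ f ∈ p.F, q.p n (listOf f n) = some (f n)

def graphSet (p : PRCond) : Set ((ℕ × List ℕ) × ℕ) :=
  {x | p.p x.1.1 x.1.2 = some x.2}

lemma graphSet_finite (p : PRCond) : (graphSet p).Finite := by
  have hD : Set.Finite {x : ℕ × List ℕ | p.p x.1 x.2 ≠ none} := by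
    have hsub : {x : ℕ × List ℕ | p.p x.1 x.2 ≠ none} ⊆
        ⋃ n ∈ (p.ones : Set ℕ), (fun σ => (n, σ)) '' {σ | p.p n σ ≠ none} := by
      rintro ⟨n, σ⟩ h
      exact Set.mem_biUnion (p.p_dom n σ h).1 ⟨σ, h, rfl⟩
    exact Set.Finite.subset (Set.Finite.biUnion p.ones.finite_toSet
      (fun n _ => (p.p_fin n).image _)) hsub
  have hsub2 : graphSet p ⊆ (fun x : ℕ × List ℕ => (x, (p.p x.1 x.2).getD 0)) ''
      {x | p.p x.1 x.2 ≠ none} := by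
    rintro ⟨⟨n, σ⟩, v⟩ h
    simp only [graphSet, Set.mem_setOf_eq] at h
    exact ⟨(n, σ), by simp [h], by simp [h]⟩
  exact Set.Finite.subset (hD.image _) hsub2

noncomputable def codeOf (p : PRCond) : ℕ :=
  Encodable.encode (p.len, p.ones, (graphSet_finite p).toFinset)

lemma codeOf_eq {p q : PRCond} (h : codeOf p = codeOf q) :
    p.len = q.len ∧ p.ones = q.ones ∧ p.p = q.p := by
  have h' := Encodable.encode_injective h
  have h1 : p.len = q.len := congrArg Prod.fst h'
  have h2 : p.ones = q.ones := congrArg (fun x => x.2.1) h'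
  have h3 : (graphSet_finite p).toFinset = (graphSet_finite q).toFinset :=
    congrArg (fun x => x.2.2) h'
  have h3' : graphSet p = graphSet q := by
    rw [← (graphSet_finite p).coe_toFinset, ← (graphSet_finite q).coe_toFinset, h3]
  refine ⟨h1, h2, ?_⟩
  funext n σ
  rcases hp : p.p n σ with _ | v
  · rcases hq : q.p n σ with _ | w
    · rfl
    · have : ((n, σ), w) ∈ graphSet p := h3' ▸ hq
      simp only [graphSet, Set.mem_setOf_eq] at this
      rw [hp] at this; exact absurd this (by simp)
  · have : ((n, σ), v) ∈ graphSet q := h3' ▸ hp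
    simp only [graphSet, Set.mem_setOf_eq] at this
    rw [this]

lemma listOf_eq_iff {f g : ℕ → ℕ} {N : ℕ} :
    listOf f N = listOf g N ↔ ∀ n < N, f n = g n := by
  simp [listOf, List.map_eq_map_iff, List.mem_range]

lemma exists_sep {Fu : Set (ℕ → ℕ)} (hFu : Fu.Finite) (M : ℕ) :
    ∃ N, M ≤ N ∧ ∀ f ∈ Fu, ∀ g ∈ Fu, listOf f N = listOf g N → f = g := by
  classical
  set T := hFu.toFinset with hT
  refine ⟨max M ((T ×ˢ T).sup (fun fg =>
    if h : fg.1 = fg.2 then 0 else Nat.find (Function.ne_iff.mp h) + 1)),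
    le_max_left _ _, ?_⟩
  intro f hf g hg heq
  by_contra hne
  have hmem : (f, g) ∈ T ×ˢ T := by
    simp [hT, Set.Finite.mem_toFinset, hf, hg]
  have hle := Finset.le_sup (f := fun fg : (ℕ → ℕ) × (ℕ → ℕ) =>
    if h : fg.1 = fg.2 then 0 else Nat.find (Function.ne_iff.mp h) + 1) hmem
  dsimp only at hle
  rw [dif_neg hne] at hle
  have hlt : Nat.find (Function.ne_iff.mp hne) <
      max M ((T ×ˢ T).sup (fun fg =>
        if h : fg.1 = fg.2 then 0 else Nat.find (Function.ne_iff.mp h) + 1)) :=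
    lt_of_lt_of_le (Nat.lt_succ_self _) (le_trans hle (le_max_right _ _))
  exact Nat.find_spec (Function.ne_iff.mp hne) (listOf_eq_iff.mp heq _ hlt)

theorem stmt6 :
    ∃ c : PRCond → ℕ, ∀ s : Finset PRCond,
      (∀ p ∈ s, ∀ q ∈ s, c p = c q) → s.Nonempty →
      ∃ r : PRCond, ∀ p ∈ s, PRle r p := by
  classical
  refine ⟨codeOf, fun s hs ⟨p0, hp0⟩ => ?_⟩
  have hFu : (⋃ p ∈ (s : Set PRCond), p.F).Finite :=
    Set.Finite.biUnion s.finite_toSet (fun p _ => p.F_fin)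
  obtain ⟨N, hMN, hsep⟩ := exists_sep hFu p0.len
  refine ⟨⟨N, p0.ones, fun n hn => lt_of_lt_of_le (p0.ones_lt n hn) hMN,
    p0.p, p0.p_dom, p0.p_fin, ⋃ p ∈ (s : Set PRCond), p.F, hFu, hsep⟩, ?_⟩
  intro p hp
  obtain ⟨h1, h2, h3⟩ := codeOf_eq (hs p0 hp0 p hp)
  refine ⟨h1 ▸ hMN, ?_, ?_, ?_, ?_, ?_⟩
  · intro n hn; show n ∈ p0.ones; rw [h2]; exact hn
  · intro n hn _; exact h2 ▸ (hn : n ∈ p0.ones)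
  · intro n _ σ v hv; show p0.p n σ = some v; rw [h3]; exact hv
  · exact Set.subset_biUnion_of_mem hp
  · intro n hn hn'; exact absurd (h2 ▸ (hn : n ∈ p0.ones)) hn'
end

section
/- The bounding number of the relational system ⟨ω^ω, Pred₀, 0*-predicted-by⟩ equals 𝔢₀, where Pred₀ is the set of predictors that predict no eventually zero function. That is, the least size of a family F ⊆ ω^ω such that no π ∈ Pred₀ 0*-predicts all members of F equals the least size of a family F ⊆ ω^ω such that no predictor at all 0*-predicts all members of F. -/
open Filter Set

/-! ### Auxiliary lemmas -/

/-- 0* is countable. -/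
lemma evZero_countable : {f : ℕ → ℕ | EvZero f}.Countable := by
  apply Set.Countable.mono _ (Set.countable_range (fun s : List ℕ => fun i => s.getD i 0))
  intro f hf
  obtain ⟨N, hN⟩ := eventually_atTop.1 hf
  refine ⟨List.ofFn (fun j : Fin N => f j), ?_⟩
  funext i
  by_cases h : i < N
  · simp [List.getD, List.ofFnNthVal, h]
  · simp [List.getD, List.ofFnNthVal, h, hN i (le_of_not_gt h)]

/-- Diagonal function escaping a predictor. -/
def diagF (π : Predictor) : ℕ → ℕ
  | n => π.p n (fun i => if h : i < n then diagF π i else 0) + 1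
decreasing_by exact h

lemma restr_diagF (π : Predictor) (n : ℕ) :
    restr (diagF π) n = fun i => if h : i < n then diagF π i else 0 := by
  funext i
  by_cases h : i < n <;> simp [restr, h]

lemma diagF_eq (π : Predictor) (n : ℕ) :
    diagF π n = π.p n (restr (diagF π) n) + 1 := by
  rw [diagF, restr_diagF]

lemma diag_spec (π : Predictor) : ¬ EvZero (diagF π) ∧ ¬ Predicts π (diagF π) := by
  constructor
  · intro h
    obtain ⟨n, hn⟩ := h.exists
    rw [diagF_eq] at hn
    exact Nat.succ_ne_zero _ hn
  · intro h
    obtain ⟨N, hN⟩ := eventually_atTop.1 h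
    obtain ⟨m, hmD, hm⟩ := π.Dinf.exists_gt N
    have := hN m hm.le hmD
    rw [diagF_eq] at this
    exact Nat.succ_ne_self _ this

/-- If `f ≠ g` then eventually their restrictions differ. -/
lemma restr_ne_eventually {f g : ℕ → ℕ} (h : f ≠ g) :
    ∀ᶠ n in atTop, restr f n ≠ restr g n := by
  obtain ⟨m, hm⟩ : ∃ m, f m ≠ g m := by
    by_contra hc; push_neg at hc; exact h (funext hc)
  filter_upwards [eventually_gt_atTop m] with n hn heq
  have := congrFun heq m
  simp only [restr, if_pos hn] at this
  exact hm this

/-- For a finite family there is a predictor in Pred₀ that 0*-predicts every member. -/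
lemma finite_witness {F : Set (ℕ → ℕ)} (hF : F.Finite) :
    ∃ π : Predictor, (∀ g, EvZero g → ¬ Predicts π g) ∧ ∀ f ∈ F, ZPredicts π f := by
  classical
  set G : Set (ℕ → ℕ) := {f ∈ F | ¬ EvZero f} with hGdef
  have hGfin : G.Finite := hF.subset (fun f hf => hf.1)
  set π : Predictor := ⟨Set.univ, Set.infinite_univ, fun n s =>
    if h : ∃ f ∈ G, restr f n = s then h.choose n else 1⟩ with hπdef
  have hnopred : ∀ g, EvZero g → ¬ Predicts π g := by
    intro g hg hp
    have hsep : ∀ᶠ n in atTop, ∀ f ∈ G, restr f n ≠ restr g n := by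
      rw [hGfin.eventually_all]
      intro f hf
      exact restr_ne_eventually (fun h => hf.2 (h ▸ hg))
    have : ∀ᶠ n in (atTop : Filter ℕ), False := by
      filter_upwards [hsep, hg, hp] with n hn1 hn2 hn3
      have hmem : n ∈ π.D := Set.mem_univ n
      have := hn3 hmem
      rw [hn2] at this
      have hno : ¬ ∃ f ∈ G, restr f n = restr g n := by
        rintro ⟨f, hfG, hfe⟩; exact hn1 f hfG hfe
      simp only [hπdef, dif_neg hno] at this
      exact one_ne_zero this.symm
    exact this.exists.choose_spec
  refine ⟨π, hnopred, ?_⟩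
  intro f hfF
  by_cases hf : EvZero f
  · exact Or.inr ⟨hf, hnopred f hf⟩
  · left
    refine ⟨hf, ?_⟩
    have hfG : f ∈ G := ⟨hfF, hf⟩
    have hsep : ∀ᶠ n in atTop, ∀ g ∈ G, g ≠ f → restr g n ≠ restr f n := by
      rw [hGfin.eventually_all]
      intro g hg
      by_cases hgf : g = f
      · exact Eventually.of_forall (fun n h => absurd hgf h)
      · filter_upwards [restr_ne_eventually hgf] with n hn
        exact fun _ => hn
    filter_upwards [hsep] with n hn _
    have hex : ∃ g ∈ G, restr g n = restr f n := ⟨f, hfG, rfl⟩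
    have hcs := hex.choose_spec
    have hchoose : hex.choose = f := by
      by_contra hne
      exact hn hex.choose hcs.1 hne hcs.2
    simp only [hπdef, dif_pos hex]
    rw [hchoose]

theorem stmt10 :
    sInf { c | ∃ F : Set (ℕ → ℕ), Cardinal.mk F = c ∧
      ∀ π : Predictor, (∀ g, EvZero g → ¬ Predicts π g) →
        ∃ f ∈ F, ¬ ZPredicts π f } = eZero := by
  classical
  set A := { c | ∃ F : Set (ℕ → ℕ), Cardinal.mk F = c ∧
      ∀ π : Predictor, (∀ g, EvZero g → ¬ Predicts π g) →
        ∃ f ∈ F, ¬ ZPredicts π f } with hA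
  set B := { c | ∃ F : Set (ℕ → ℕ), Cardinal.mk F = c ∧
      ∀ π : Predictor, ∃ f ∈ F, ¬ ZPredicts π f } with hB
  have hBA : B ⊆ A := by
    rintro c ⟨F, hF, hw⟩
    exact ⟨F, hF, fun π _ => hw π⟩
  have hBne : B.Nonempty := by
    refine ⟨Cardinal.mk (Set.univ : Set (ℕ → ℕ)), Set.univ, rfl, fun π => ?_⟩
    obtain ⟨h1, h2⟩ := diag_spec π
    refine ⟨diagF π, Set.mem_univ _, ?_⟩
    rintro (⟨_, hp⟩ | ⟨hz, _⟩)
    · exact h2 hp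
    · exact h1 hz
  have h1 : sInf A ≤ sInf B := csInf_le_csInf (OrderBot.bddBelow A) hBne hBA
  have hAne : A.Nonempty := hBne.mono hBA
  obtain ⟨F, hFmk, hFw⟩ := csInf_mem hAne
  have hFinf : F.Infinite := by
    by_contra hfin
    rw [Set.not_infinite] at hfin
    obtain ⟨π, hπ1, hπ2⟩ := finite_witness hfin
    obtain ⟨f, hfF, hnz⟩ := hFw π hπ1
    exact hnz (hπ2 f hfF)
  set F' : Set (ℕ → ℕ) := F ∪ {f | EvZero f} with hF'
  have hmk : Cardinal.mk F' ≤ sInf A := by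
    calc Cardinal.mk F' ≤ Cardinal.mk F + Cardinal.mk {f : ℕ → ℕ | EvZero f} :=
          Cardinal.mk_union_le _ _
      _ ≤ Cardinal.mk F + Cardinal.aleph0 := by
          gcongr
          exact evZero_countable.le_aleph0
      _ = Cardinal.mk F :=
          Cardinal.add_eq_left (Cardinal.aleph0_le_mk_iff.mpr hFinf.to_subtype) (Cardinal.aleph0_le_mk_iff.mpr hFinf.to_subtype)
      _ = sInf A := hFmk
  have hF'B : Cardinal.mk F' ∈ B := by
    refine ⟨F', rfl, fun π => ?_⟩
    by_cases hπ : ∀ g, EvZero g → ¬ Predicts π g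
    · obtain ⟨f, hfF, hnz⟩ := hFw π hπ
      exact ⟨f, Or.inl hfF, hnz⟩
    · push_neg at hπ
      obtain ⟨g, hg, hgp⟩ := hπ
      refine ⟨g, Or.inr hg, ?_⟩
      rintro (⟨h, _⟩ | ⟨_, h⟩)
      · exact h hg
      · exact h hgp
  have h2 : sInf B ≤ Cardinal.mk F' := csInf_le (OrderBot.bddBelow B) hF'B
  have : eZero = sInf B := rfl
  rw [this]
  exact le_antisymm h1 (h2.trans hmk)
end

section
/- For k = 1, the global evasion number 𝔢ᵍ₁ equals ℵ₁: there is a family of ℵ₁ functions in ω^ω not all globally predicted by any single global predictor of width 1, while every countable family is globally predicted by a single global predictor of width 1. -/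
open Filter Set

-- AUX START
open scoped Classical

noncomputable def uq (π : GPred 1) (n : ℕ) (σ : ℕ → ℕ) : ℕ :=
  (π.p n σ).min' (Finset.card_pos.mp (by rw [π.card_eq]; norm_num))

lemma uq_eq (π : GPred 1) (n : ℕ) (σ : ℕ → ℕ) {x : ℕ} (hx : x ∈ π.p n σ) :
    x = uq π n σ := by
  obtain ⟨a, ha⟩ := Finset.card_eq_one.mp (π.card_eq n σ)
  rw [ha] at hx
  simp only [Finset.mem_singleton] at hx
  subst hx
  simp [uq, ha]

noncomputable def recF (π : GPred 1) (N : ℕ) (l : List ℕ) : ℕ → ℕ → ℕ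
  | 0 => fun _ => 0
  | n+1 => fun i =>
      if i = n then (if n < N then l.getD n 0 else uq π n (recF π N l n))
      else recF π N l n i

noncomputable def gfun (π : GPred 1) (N : ℕ) (l : List ℕ) (n : ℕ) : ℕ :=
  recF π N l (n+1) n

lemma recF_eq (π : GPred 1) (N : ℕ) (l : List ℕ) (n : ℕ) :
    recF π N l n = restr (gfun π N l) n := by
  induction n with
  | zero => funext i; simp [recF, restr]
  | succ n ih =>
    funext i
    by_cases h : i = n
    · subst h
      simp only [restr, Nat.lt_succ_self, if_pos]
      rfl
    · have : recF π N l (n+1) i = recF π N l n i := by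
        simp [recF, h]
      rw [this, ih]
      simp only [restr]
      split_ifs with h1 h2 <;> first | rfl | omega

lemma predicted_eq (π : GPred 1) (f : ℕ → ℕ) (N : ℕ)
    (h : ∀ n ≥ N, f n ∈ π.p n (restr f n)) :
    f = gfun π N ((List.range N).map f) := by
  funext n
  induction n using Nat.strong_induction_on with
  | _ n ih =>
    have hres : restr f n = restr (gfun π N ((List.range N).map f)) n := by
      funext i; simp only [restr]; split_ifs with hi
      · exact ih i hi
      · rfl
    show f n = recF π N ((List.range N).map f) (n+1) n
    simp only [recF, if_pos rfl]
    by_cases hn : n < N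
    · rw [if_pos hn]
      simp [List.getD_eq_getElem?_getD, List.getElem?_map, List.getElem?_range, hn]
    · rw [if_neg hn, recF_eq, ← hres]
      exact uq_eq π n (restr f n) (h n (le_of_not_gt hn))

lemma predicted_countable (π : GPred 1) : {f : ℕ → ℕ | GPredicts π f}.Countable := by
  have hsub : {f : ℕ → ℕ | GPredicts π f} ⊆
      Set.range (fun q : ℕ × List ℕ => gfun π q.1 q.2) := by
    intro f hf
    rw [Set.mem_setOf_eq, GPredicts, Filter.eventually_atTop] at hf
    obtain ⟨N, hN⟩ := hf
    exact ⟨(N, (List.range N).map f), (predicted_eq π f N hN).symm⟩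
  exact (Set.countable_range _).mono hsub

noncomputable def mkPred (g : ℕ → ℕ → ℕ) : GPred 1 where
  p n σ := {g (if h : ∃ i, restr (g i) n = σ then Nat.find h else 0) n}
  card_eq n σ := Finset.card_singleton _

lemma mkPred_predicts (g : ℕ → ℕ → ℕ) (j : ℕ) : GPredicts (mkPred g) (g j) := by
  have hex : ∃ i, g i = g j := ⟨j, rfl⟩
  set i0 := Nat.find hex with hi0
  have hgi0 : g i0 = g j := Nat.find_spec hex
  have hdiff : ∀ i, ∃ m, g i ≠ g j → g i m ≠ g j m := by
    intro i
    by_cases h : g i = g j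
    · exact ⟨0, fun hc => absurd h hc⟩
    · have h2 : ∃ m, g i m ≠ g j m := by
        by_contra hc; push_neg at hc; exact h (funext hc)
      obtain ⟨m, hm⟩ := h2; exact ⟨m, fun _ => hm⟩
  choose m hm using hdiff
  rw [GPredicts, Filter.eventually_atTop]
  refine ⟨(Finset.range i0).sup m + 1, fun n hn => ?_⟩
  have h' : ∃ i, restr (g i) n = restr (g j) n := ⟨i0, by rw [hgi0]⟩
  have hfind : Nat.find h' = i0 := by
    have hle : Nat.find h' ≤ i0 := Nat.find_le (by rw [hgi0])
    rcases lt_or_eq_of_le hle with hlt | heq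
    · exfalso
      have hne : g (Nat.find h') ≠ g j := Nat.find_min hex hlt
      have hmem : Nat.find h' ∈ Finset.range i0 := Finset.mem_range.mpr hlt
      have hmn : m (Nat.find h') < n := by
        have := Finset.le_sup (f := m) hmem
        omega
      have := congrFun (Nat.find_spec h') (m (Nat.find h'))
      simp only [restr, if_pos hmn] at this
      exact hm _ hne this
    · exact heq
  show g j n ∈ (mkPred g).p n (restr (g j) n)
  simp only [mkPred, dif_pos h', hfind, Finset.mem_singleton]
  rw [hgi0]
-- AUX END

theorem stmt12 : egNum 1 = Cardinal.aleph 1 := by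
  have hmem : Cardinal.aleph 1 ∈ { c | ∃ F : Set (ℕ → ℕ), Cardinal.mk F = c ∧
      ∀ π : GPred 1, ∃ f ∈ F, ¬ GPredicts π f } := by
    have h1 : Cardinal.aleph 1 ≤ Cardinal.mk (ℕ → ℕ) := by
      have h2 : Cardinal.mk (ℕ → ℕ) = Cardinal.continuum := by
        rw [Cardinal.mk_arrow]
        simp [Cardinal.mk_nat, Cardinal.aleph0_power_aleph0]
      rw [h2]; exact Cardinal.aleph_one_le_continuum
    obtain ⟨F, hF⟩ := Cardinal.le_mk_iff_exists_set.mp h1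
    refine ⟨F, hF, fun π => ?_⟩
    by_contra h
    push_neg at h
    have hsub : F ⊆ {f | GPredicts π f} := fun f hf => h f hf
    have hcnt : F.Countable := (predicted_countable π).mono hsub
    have : Cardinal.mk F ≤ Cardinal.aleph0 := by
      rw [Cardinal.mk_le_aleph0_iff, Set.countable_coe_iff]; exact hcnt
    rw [hF] at this
    exact absurd this (not_le.mpr Cardinal.aleph0_lt_aleph_one)
  refine le_antisymm (csInf_le' hmem) (le_csInf ⟨_, hmem⟩ ?_)
  rintro c ⟨F, hF, hπ⟩
  by_contra hc
  push_neg at hc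
  rw [← hF] at hc
  have hcount : F.Countable := (Cardinal.countable_iff_lt_aleph_one F).mpr hc
  rcases F.eq_empty_or_nonempty with hemp | hne
  · obtain ⟨f, hf, -⟩ := hπ ⟨fun _ _ => {0}, fun _ _ => Finset.card_singleton _⟩
    rw [hemp] at hf; exact hf
  · obtain ⟨g, hg⟩ := Set.Countable.exists_eq_range hcount hne
    obtain ⟨f, hf, hnp⟩ := hπ (mkPred g)
    rw [hg] at hf
    obtain ⟨j, rfl⟩ := hf
    exact hnp (mkPred_predicts g j)
end

section
/- Modifying a predictor π on inputs that are 'flagged as eventually-zero-looking' preserves prediction of non-eventually-zero functions: let π = (D, {π_k}) be a predictor, J an interval partition dominating I^f for a fixed f ∈ ω^ω ∖ 0*, and D′ = {d_0 < d_1 < ⋯} ⊆ D with max J_{m_i} < d_i < min J_{m_{i+1}} for an increasing sequence ⟨m_i⟩. Define π′ = (D′, {π′_k}) by π′_{d_i}(σ) = π_{d_i}(σ) if σ(n) ≠ 0 for some n ∈ J_{m_i}, and π′_{d_i}(σ) = 1 otherwise. If π predicts f, then π′ predicts f. -/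
open Filter Set

theorem stmt18 (π : Predictor) (f : ℕ → ℕ) (hf : ¬ EvZero f)
    (If : IntPart) (hIf : IsNZPart f If) (J : IntPart) (m : ℕ → ℕ)
    (hm : StrictMono m)
    (hdom : ∀ᶠ i in atTop, ∃ l, blk If l ⊆ blk J (m i))
    (d : ℕ → ℕ) (hd : StrictMono d) (hdD : ∀ i, d i ∈ π.D)
    (hsep : ∀ i, (∀ x ∈ blk J (m i), x < d i) ∧ ∀ x ∈ blk J (m (i+1)), d i < x)
    (π' : Predictor) (hD' : π'.D = Set.range d)
    (hp' : ∀ i σ, ((∃ n ∈ blk J (m i), σ n ≠ 0) → π'.p (d i) σ = π.p (d i) σ) ∧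
      ((¬ ∃ n ∈ blk J (m i), σ n ≠ 0) → π'.p (d i) σ = 1)) :
    Predicts π f → Predicts π' f := by
  intro hpred
  rw [Predicts, Filter.eventually_atTop] at hpred ⊢
  rw [Filter.eventually_atTop] at hdom
  obtain ⟨N₁, h₁⟩ := hpred
  obtain ⟨N₂, h₂⟩ := hdom
  refine ⟨max (d (max N₂ 1)) N₁, fun n hn hnD => ?_⟩
  rw [hD'] at hnD
  obtain ⟨i, rfl⟩ := hnD
  have hi : max N₂ 1 ≤ i := hd.le_iff_le.mp (le_trans (le_max_left _ _) hn)
  have hi1 : 1 ≤ i := le_trans (le_max_right _ _) hi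
  obtain ⟨l, hl⟩ := h₂ i (le_trans (le_max_left _ _) hi)
  have hl1 : 1 ≤ l := by
    by_contra h
    push_neg at h
    interval_cases l
    have h0 : (0:ℕ) ∈ blk If 0 := by
      constructor
      · simp [If.t0]
      · have := If.mono (show (0:ℕ) < 0 + 1 by norm_num)
        omega
    have hmem := hl h0
    have hJ0 : J.t (m i) = 0 := Nat.le_zero.mp hmem.1
    have hmi0 : m i = 0 := J.mono.injective (hJ0.trans J.t0.symm)
    have : i ≤ m i := hm.le_apply
    omega
  obtain ⟨k, rfl⟩ : ∃ k, l = k + 1 := ⟨l - 1, by omega⟩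
  have hn' : If.t (k+1) ∈ blk J (m i) :=
    hl ⟨le_refl _, If.mono (by omega)⟩
  have hlt : If.t (k+1) < d i := (hsep i).1 _ hn'
  have hnz : ∃ n ∈ blk J (m i), restr f (d i) n ≠ 0 :=
    ⟨If.t (k+1), hn', by simp only [restr, if_pos hlt]; exact hIf.1 k⟩
  rw [(hp' i _).1 hnz]
  exact h₁ (d i) (le_trans (le_max_right _ _) hn) (hdD i)
end
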